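/- Assume conditions (M), (O), (R), (P). Let U ∈ Cm/∼ be a PIP equivalence class and let η, ν₁, ν₂ ∈ U with η ≠ ν₁, ν₁ ≠ ν₂ and ν₂ ≠ η. Then ν₁ • ν₂ = η if and only if ν₁ ⊓ ν₂ ≤ η. (This is Lemma 14 of the paper, relating the Boolean group operation on a PIP class to the meet operation of the congruence lattice.) -/

import Mathlib

/-!
By (P), `η`, `ν₁` and `ν₂` have a common cover `p`. For a completely meet irreducible `ν` with
cover `p`, the join `ν ⊔ Θ(1,t)` is either `ν` or `p ⊔ Θ(1,t)`, so (O) shows that `ν` coincides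
with `p` except that it splits the `p`-class of `1` into the `ν`-class of `1` and its
complement. Hence `ν` is determined by its class of `1`, and `ν₁ • ν₂` has the same shape.
If `ν₁ ⊓ ν₂ ≤ η`, modularity makes the meet of any two of `η, ν₁, ν₂` lie below the third, and
(R) rules out an element of the `p`-class of `1` lying in none of their classes of `1`: every
such element lies in the classes of all three or of exactly one, which says that `η` and
`ν₁ • ν₂` have the same class of `1`.
-/

variable {A : Type*}

/-- `η` is a completely meet irreducible member of `C`, with (unique) cover `p` in `C`. -/
def IsCMI (C : Set (Setoid A)) (η p : Setoid A) : Prop :=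
  η ∈ C ∧ p ∈ C ∧ η < p ∧ ∀ β ∈ C, η < β → p ≤ β

/-- A single up or down transposition between the intervals `I[pq.1, pq.2]`
and `I[rs.1, rs.2]` of `C`. -/
def Persp (C : Set (Setoid A)) (pq rs : Setoid A × Setoid A) : Prop :=
  pq.1 ∈ C ∧ pq.2 ∈ C ∧ rs.1 ∈ C ∧ rs.2 ∈ C ∧
    ((pq.1 = pq.2 ⊓ rs.1 ∧ rs.2 = pq.2 ⊔ rs.1) ∨
      (rs.1 = rs.2 ⊓ pq.1 ∧ pq.2 = rs.2 ⊔ pq.1))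

/-- Projectivity of intervals of `C`: a finite chain of up and down transpositions. -/
def Projective (C : Set (Setoid A)) : Setoid A × Setoid A → Setoid A × Setoid A → Prop :=
  Relation.ReflTransGen (Persp C)

/-- Prime interval projectivity `φ ∼ ψ`: the prime intervals `I[φ,φ⁺]` and `I[ψ,ψ⁺]`
over completely meet irreducible members of `C` are projective. -/
def PIP (C : Set (Setoid A)) (φ ψ : Setoid A) : Prop :=
  ∃ p q, IsCMI C φ p ∧ IsCMI C ψ q ∧ Projective C (φ, p) (ψ, q)

/-- `Θ(a,b)`: the least member of `C` containing the pair `(a, b)`. -/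
def theta (C : Set (Setoid A)) (a b : A) : Setoid A :=
  sInf {s | s ∈ C ∧ s.r a b}

/-- The relation `φ • ψ`: the pairs of `p = φ⁺ = ψ⁺` on which `φ` and `ψ` agree
(the complement of the symmetric difference of `φ` and `ψ` intersected with `p`). -/
def Bul (p φ ψ : Setoid A) (x y : A) : Prop :=
  p.r x y ∧ (φ.r x y ↔ ψ.r x y)

variable {C : Set (Setoid A)} {one : A}

theorem sup_mem_of_sSup_mem (hSup : ∀ S ⊆ C, sSup S ∈ C) {x y : Setoid A}
    (hx : x ∈ C) (hy : y ∈ C) : x ⊔ y ∈ C :=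
  sSup_pair (a := x) ▸ hSup _ (Set.pair_subset hx hy)

theorem inf_mem_of_sInf_mem (hInf : ∀ S ⊆ C, sInf S ∈ C) {x y : Setoid A}
    (hx : x ∈ C) (hy : y ∈ C) : x ⊓ y ∈ C :=
  sInf_pair (a := x) ▸ hInf _ (Set.pair_subset hx hy)

theorem theta_mem (hInf : ∀ S ⊆ C, sInf S ∈ C) (a b : A) : theta C a b ∈ C :=
  hInf _ fun _ hs => hs.1

theorem theta_le_iff {s : Setoid A} (hs : s ∈ C) {a b : A} : theta C a b ≤ s ↔ s.r a b :=
  ⟨fun h => h fun _ ht => ht.2, fun h => sInf_le ⟨hs, h⟩⟩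

namespace IsCMI

variable {η ν μ p q : Setoid A}

theorem le (h : IsCMI C η p) : η ≤ p := h.2.2.1.le

theorem cover_le (h : IsCMI C η p) {β : Setoid A} (hβ : β ∈ C) (hlt : η < β) : p ≤ β :=
  h.2.2.2 β hβ hlt

theorem cover_unique (h : IsCMI C η p) (h' : IsCMI C η q) : p = q :=
  le_antisymm (h.cover_le h'.2.1 h'.2.2.1) (h'.cover_le h.2.1 h.2.2.1)

theorem of_pip (hP : ∀ φ ψ p q : Setoid A, IsCMI C φ p → IsCMI C ψ q →
      Projective C (φ, p) (ψ, q) → p = q)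
    (hη : IsCMI C η p) (h : PIP C ν η) : IsCMI C ν p := by
  obtain ⟨q, q', hν, hη', hproj⟩ := h
  rwa [← hη'.cover_unique hη, ← hP ν η q q' hν hη' hproj]

theorem eq_of_le (h : IsCMI C η p) (h' : IsCMI C μ p) (hle : η ≤ μ) : η = μ :=
  hle.eq_or_lt.resolve_right fun hlt => (h.cover_le h'.1 hlt).not_gt h'.2.2.1

theorem sup_eq_cover_sup (hSup : ∀ S ⊆ C, sSup S ∈ C) (h : IsCMI C η p) {σ : Setoid A}
    (hσ : σ ∈ C) (hση : ¬ σ ≤ η) : η ⊔ σ = p ⊔ σ :=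
  le_antisymm (sup_le_sup_right h.le σ)
    (sup_le (h.cover_le (sup_mem_of_sSup_mem hSup h.1 hσ) (left_lt_sup.2 hση)) le_sup_right)

theorem rel_iff (hInf : ∀ S ⊆ C, sInf S ∈ C) (hSup : ∀ S ⊆ C, sSup S ∈ C)
    (hO : ∀ α ∈ C, ∀ a b : A, α ⊔ theta C one a = α ⊔ theta C one b ↔ α.r a b)
    (h : IsCMI C η p) {x y : A} :
    η.r x y ↔ p.r x y ∧ (η.r one x ↔ η.r one y) := by
  refine ⟨fun hxy => ⟨h.le hxy, ⟨fun hx => η.trans' hx hxy, fun hy => η.trans' hy (η.symm' hxy)⟩⟩,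
    fun ⟨hpxy, hxy⟩ => ?_⟩
  by_cases hx : η.r one x
  · exact η.trans' (η.symm' hx) (hxy.1 hx)
  · have hy : ¬ η.r one y := mt hxy.2 hx
    rw [← hO η h.1, h.sup_eq_cover_sup hSup (theta_mem hInf _ _) (mt (theta_le_iff h.1).1 hx),
      h.sup_eq_cover_sup hSup (theta_mem hInf _ _) (mt (theta_le_iff h.1).1 hy)]
    exact (hO p h.2.1 x y).2 hpxy

/-- The modular law, applied to `c ⊓ a ≤ a`, inside the prime interval `[b, p]`. -/
theorem inf_le_of_inf_le (hInf : ∀ S ⊆ C, sInf S ∈ C) (hSup : ∀ S ⊆ C, sSup S ∈ C)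
    (hM : ∀ x ∈ C, ∀ y ∈ C, ∀ z ∈ C, x ≤ z → x ⊔ y ⊓ z = (x ⊔ y) ⊓ z)
    {a b c : Setoid A} (ha : IsCMI C a p) (hb : IsCMI C b p) (hc : IsCMI C c p)
    (hac : a ≠ c) (h : a ⊓ b ≤ c) : c ⊓ a ≤ b := by
  have hca : c ⊓ a ∈ C := inf_mem_of_sInf_mem hInf hc.1 ha.1
  rcases (le_sup_right : b ≤ c ⊓ a ⊔ b).eq_or_lt with heq | hlt
  · exact le_sup_left.trans heq.ge
  · have hp : p ≤ c ⊓ a ⊔ b := hb.cover_le (sup_mem_of_sSup_mem hSup hca hb.1) hlt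
    have hac' : a ≤ c :=
      calc a = p ⊓ a := (inf_eq_right.2 ha.le).symm
        _ ≤ (c ⊓ a ⊔ b) ⊓ a := inf_le_inf_right a hp
        _ = c ⊓ a ⊔ b ⊓ a := (hM _ hca b hb.1 a ha.1 inf_le_right).symm
        _ = c ⊓ a := sup_eq_left.2 (le_inf (inf_comm a b ▸ h) inf_le_right)
        _ ≤ c := inf_le_left
    exact absurd (ha.eq_of_le hc hac') hac

end IsCMI

theorem bul_rel_iff (hInf : ∀ S ⊆ C, sInf S ∈ C) (hSup : ∀ S ⊆ C, sSup S ∈ C)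
    (hO : ∀ α ∈ C, ∀ a b : A, α ⊔ theta C one a = α ⊔ theta C one b ↔ α.r a b)
    {ν₁ ν₂ p : Setoid A} (h₁ : IsCMI C ν₁ p) (h₂ : IsCMI C ν₂ p) {x y : A} :
    Bul p ν₁ ν₂ x y ↔ p.r x y ∧ (Bul p ν₁ ν₂ one x ↔ Bul p ν₁ ν₂ one y) := by
  simp only [Bul]
  rw [h₁.rel_iff hInf hSup hO, h₂.rel_iff hInf hSup hO]
  refine and_congr_right fun hxy => ?_
  by_cases hx : p.r one x
  · have hy : p.r one y := p.trans' hx hxy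
    simp only [hxy, hx, hy, true_and]
    tauto
  · have hy : ¬ p.r one y := fun hy => hx (p.trans' hy (p.symm' hxy))
    have hν : ∀ {ν : Setoid A}, IsCMI C ν p → ∀ {t}, ¬ p.r one t → ¬ ν.r one t :=
      fun h _ ht hνt => ht (h.le hνt)
    simp only [hx, hy, hν h₁ hx, hν h₁ hy, hν h₂ hx, hν h₂ hy, false_and]

theorem exists_rel_one_not_rel_one (hInf : ∀ S ⊆ C, sInf S ∈ C)
    (hR : ∀ α ∈ C, ∀ β ∈ C, (∀ x : A, α.r one x ↔ β.r one x) → α = β)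
    {ν₁ ν₂ p : Setoid A} (h₁ : IsCMI C ν₁ p) (h₂ : IsCMI C ν₂ p) (hne : ν₁ ≠ ν₂) :
    ∃ w, ν₂.r one w ∧ ¬ ν₁.r one w := by
  by_contra! hsub
  have hmeet : ν₁ ⊓ ν₂ = ν₂ := hR _ (inf_mem_of_sInf_mem hInf h₁.1 h₂.1) _ h₂.1 fun x =>
    ⟨fun hx => (Setoid.inf_iff_and.1 hx).2, fun hx => Setoid.inf_iff_and.2 ⟨hsub x hx, hx⟩⟩
  exact hne (h₂.eq_of_le h₁ (hmeet ▸ inf_le_left)).symm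

theorem rel_one_iff_bul (hInf : ∀ S ⊆ C, sInf S ∈ C) (hSup : ∀ S ⊆ C, sSup S ∈ C)
    (hO : ∀ α ∈ C, ∀ a b : A, α ⊔ theta C one a = α ⊔ theta C one b ↔ α.r a b)
    (hR : ∀ α ∈ C, ∀ β ∈ C, (∀ x : A, α.r one x ↔ β.r one x) → α = β)
    {η ν₁ ν₂ p : Setoid A} (hη : IsCMI C η p) (h₁ : IsCMI C ν₁ p) (h₂ : IsCMI C ν₂ p)
    (hne : ν₁ ≠ ν₂) (h₁₂ : ν₁ ⊓ ν₂ ≤ η) (hη₁ : η ⊓ ν₁ ≤ ν₂) (hη₂ : η ⊓ ν₂ ≤ ν₁) (t : A) :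
    η.r one t ↔ Bul p ν₁ ν₂ one t := by
  -- Such a `t` outside all three classes of `one` would be `η`- and `ν₁`-related to any `w` in
  -- the class of `ν₂` but not of `ν₁`, hence `ν₂`-related to `w`.
  have hcover : p.r one t → η.r one t ∨ ν₁.r one t ∨ ν₂.r one t := by
    intro ht
    by_contra! hnone
    obtain ⟨w, hw₂, hw₁⟩ := exists_rel_one_not_rel_one hInf hR h₁ h₂ hne
    have hwη : ¬ η.r one w := fun h => hw₁ (hη₂ (Setoid.inf_iff_and.2 ⟨h, hw₂⟩))
    have htw : p.r t w := p.trans' (p.symm' ht) (h₂.le hw₂)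
    have hηtw : η.r t w := (hη.rel_iff hInf hSup hO).2 ⟨htw, iff_of_false hnone.1 hwη⟩
    have h₁tw : ν₁.r t w := (h₁.rel_iff hInf hSup hO).2 ⟨htw, iff_of_false hnone.2.1 hw₁⟩
    exact hnone.2.2 (ν₂.trans' hw₂ (ν₂.symm' (hη₁ (Setoid.inf_iff_and.2 ⟨hηtw, h₁tw⟩))))
  have h₁₂t : ν₁.r one t → ν₂.r one t → η.r one t :=
    fun ha hb => h₁₂ (Setoid.inf_iff_and.2 ⟨ha, hb⟩)
  have hη₁t : η.r one t → ν₁.r one t → ν₂.r one t :=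
    fun he ha => hη₁ (Setoid.inf_iff_and.2 ⟨he, ha⟩)
  have hη₂t : η.r one t → ν₂.r one t → ν₁.r one t :=
    fun he hb => hη₂ (Setoid.inf_iff_and.2 ⟨he, hb⟩)
  have hηp : η.r one t → p.r one t := fun h => hη.le h
  unfold Bul
  tauto

theorem stmt11_general (one : A) (C : Set (Setoid A))
    (hInf : ∀ S ⊆ C, sInf S ∈ C) (hSup : ∀ S ⊆ C, sSup S ∈ C)
    (hM : ∀ x ∈ C, ∀ y ∈ C, ∀ z ∈ C, x ≤ z → x ⊔ y ⊓ z = (x ⊔ y) ⊓ z)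
    (hO : ∀ α ∈ C, ∀ a b : A, α ⊔ theta C one a = α ⊔ theta C one b ↔ α.r a b)
    (hR : ∀ α ∈ C, ∀ β ∈ C, (∀ x : A, α.r one x ↔ β.r one x) → α = β)
    (hP : ∀ φ ψ p q : Setoid A, IsCMI C φ p → IsCMI C ψ q →
      Projective C (φ, p) (ψ, q) → p = q)
    (η ν₁ ν₂ p : Setoid A) (hη : IsCMI C η p)
    (h1 : PIP C ν₁ η) (h2 : PIP C ν₂ η)
    (hne1 : η ≠ ν₁) (hne2 : ν₁ ≠ ν₂) (hne3 : ν₂ ≠ η) :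
    η.r = Bul p ν₁ ν₂ ↔ ν₁ ⊓ ν₂ ≤ η := by
  have h₁ : IsCMI C ν₁ p := hη.of_pip hP h1
  have h₂ : IsCMI C ν₂ p := hη.of_pip hP h2
  constructor
  · intro heq x y hxy
    obtain ⟨hx₁, hx₂⟩ := Setoid.inf_iff_and.1 hxy
    show η.r x y
    exact heq ▸ ⟨h₁.le hx₁, iff_of_true hx₁ hx₂⟩
  · intro h₁₂
    have hη₁ : η ⊓ ν₁ ≤ ν₂ := h₁.inf_le_of_inf_le hInf hSup hM h₂ hη hne1.symm h₁₂
    have hη₂ : η ⊓ ν₂ ≤ ν₁ :=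
      h₂.inf_le_of_inf_le hInf hSup hM h₁ hη hne3 (inf_comm ν₁ ν₂ ▸ h₁₂)
    have hclass := rel_one_iff_bul hInf hSup hO hR hη h₁ h₂ hne2 h₁₂ hη₁ hη₂
    funext x y
    rw [hη.rel_iff hInf hSup hO, bul_rel_iff hInf hSup hO h₁ h₂, hclass x, hclass y]

/-- Lemma 14: for pairwise distinct `η, ν₁, ν₂` in one PIP class `U` (with common
cover `p`), `ν₁ • ν₂ = η` iff `ν₁ ⊓ ν₂ ≤ η`. -/
theorem stmt11 (one : A) (C : Set (Setoid A))
    (hInf : ∀ S ⊆ C, sInf S ∈ C) (hSup : ∀ S ⊆ C, sSup S ∈ C)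
    (hDir : ∀ D ⊆ C, D.Nonempty → DirectedOn (· ≤ ·) D →
      ∀ x y : A, (sSup D).r x y ↔ ∃ s ∈ D, s.r x y)
    (hM : ∀ x ∈ C, ∀ y ∈ C, ∀ z ∈ C, x ≤ z → x ⊔ y ⊓ z = (x ⊔ y) ⊓ z)
    (hO : ∀ α ∈ C, ∀ a b : A, α ⊔ theta C one a = α ⊔ theta C one b ↔ α.r a b)
    (hR : ∀ α ∈ C, ∀ β ∈ C, (∀ x : A, α.r one x ↔ β.r one x) → α = β)
    (hP : ∀ φ ψ p q : Setoid A, IsCMI C φ p → IsCMI C ψ q →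
      Projective C (φ, p) (ψ, q) → p = q)
    (η ν₁ ν₂ p : Setoid A) (hη : IsCMI C η p)
    (h1 : PIP C ν₁ η) (h2 : PIP C ν₂ η)
    (hne1 : η ≠ ν₁) (hne2 : ν₁ ≠ ν₂) (hne3 : ν₂ ≠ η) :
    η.r = Bul p ν₁ ν₂ ↔ ν₁ ⊓ ν₂ ≤ η :=
  stmt11_general one C hInf hSup hM hO hR hP η ν₁ ν₂ p hη h1 h2 hne1 hne2 hne3
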